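/- Let k be a field of characteristic zero and G a finite group. For any idempotent e in k[G], the coefficient of the identity element in e (i.e., the standard trace τ(e)) equals (dim_k e·k[G])/|G|; in particular τ(e) is a nonnegative rational number. -/

import Mathlib

/-- For an idempotent e in k[G], k a field of characteristic zero and G finite, the
coefficient of the identity in e equals dim_k(e·k[G])/|G|; in particular it is a
nonnegative rational number. -/
theorem trace_idempotent_group_algebra
    (k : Type*) [Field k] [CharZero k] (G : Type*) [Group G] [Fintype G]
    (e : MonoidAlgebra k G) (he : e * e = e) :
    e.coeff 1 = (Module.finrank k (LinearMap.range (LinearMap.mulLeft k e)) : k) /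
        (Fintype.card G : k) ∧
      ∃ q : ℚ, 0 ≤ q ∧ e.coeff 1 = (q : k) := by
  classical
  set f := LinearMap.mulLeft k e with hf
  have hproj : LinearMap.IsProj (LinearMap.range f) f := by
    constructor
    · intro x; exact ⟨x, rfl⟩
    · rintro x ⟨y, rfl⟩
      show e * (e * y) = e * y
      rw [← mul_assoc, he]
  let b : Module.Basis G k (MonoidAlgebra k G) := MonoidAlgebra.basis G k
  haveI : Module.Finite k (MonoidAlgebra k G) := Module.Finite.of_basis b
  have htr : LinearMap.trace k _ f =
      (Module.finrank k (LinearMap.range f) : k) := hproj.trace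
  have htr2 : LinearMap.trace k _ f = (Fintype.card G : k) * e.coeff 1 := by
    rw [LinearMap.trace_eq_matrix_trace k b]
    have : ∀ g : G, LinearMap.toMatrix b b f g g = e.coeff 1 := by
      intro g
      rw [LinearMap.toMatrix_apply]
      have hb : b g = MonoidAlgebra.single g 1 := rfl
      have hr : ∀ x : MonoidAlgebra k G, b.repr x = x.coeff := fun _ => rfl
      rw [hb, hr]
      show (e * MonoidAlgebra.single g 1 : MonoidAlgebra k G).coeff g = e.coeff 1
      rw [MonoidAlgebra.coeff_mul_single_apply]
      simp
    simp [Matrix.trace, Matrix.diag, this, Finset.card_univ]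
  have hcard : (Fintype.card G : k) ≠ 0 := Nat.cast_ne_zero.mpr Fintype.card_ne_zero
  have h1 : e.coeff 1 = (Module.finrank k (LinearMap.range f) : k) / (Fintype.card G : k) := by
    field_simp
    rw [mul_comm, ← htr2, htr]
  refine ⟨h1, ⟨(Module.finrank k (LinearMap.range f) : ℚ) / (Fintype.card G : ℚ), ?_, ?_⟩⟩
  · positivity
  · rw [h1]; push_cast; ring
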